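/- Let V ≠ {0} be a normed vector space, X ≠ {0} a Banach space, and E a Banach sequence space with c₀₀(X) ⊆ E. If the set A_{V,E} = {u : V → E : u linear, continuous and non-injective} is nonzero (contains a nonzero element), then A_{V,E} is (1, β)-spaceable, where β = max{𝔠, dim X}: for each nonzero v ∈ A_{V,E}, there is a closed subspace W of L(V, E) with dim W ≥ β, v ∈ W, and W ⊆ A_{V,E} ∪ {0}. -/

import Mathlib

/-!
Pick `x ≠ 0` with `v x = 0`. The operators vanishing at `x` form a closed subspace `W`
containing `v` and made of non-injective operators. If `ψ` is a functional with `ψ ∘ v ≠ 0`,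
then `z ↦ (ψ ∘ v) (·) • z` embeds `E` into `W`, so it suffices to bound `dim E` from below.
The finitely supported sequences give `dim E ≥ ℵ₀ · dim X = max ℵ₀ (dim X)`, and an
infinite-dimensional Banach space has dimension at least `𝔠`: a biorthogonal system `(yₙ, fₙ)`
with `‖yₙ‖ ≤ 1` produces the vectors `∑ tⁿ yₙ`, `0 < t < 1`, whose coordinate sequences `(tⁿ)ₙ`
are linearly independent by Artin's independence of characters of the monoid `ℕ`.
-/

universe u v w

open Cardinal Set

section Biorthogonal

variable {K M : Type*} [Field K] [AddCommGroup M] [Module K M]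

/-- Gram–Schmidt orthogonalization against the functionals `f`. -/
noncomputable def biorthogonalize (e : ℕ → M) (f : ℕ → Module.Dual K M) : ℕ → M
  | n => e n - ∑ m ∈ (Finset.range n).attach, f m (e n) • biorthogonalize e f m
  decreasing_by exact Finset.mem_range.mp m.2

lemma biorthogonalize_eq (e : ℕ → M) (f : ℕ → Module.Dual K M) (n : ℕ) :
    biorthogonalize e f n = e n - ∑ m ∈ Finset.range n, f m (e n) • biorthogonalize e f m := by
  rw [biorthogonalize,
    Finset.sum_attach (Finset.range n) fun m => f m (e n) • biorthogonalize e f m]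

lemma apply_biorthogonalize {e : ℕ → M} {f : ℕ → Module.Dual K M}
    (hlower : ∀ k n, n < k → f k (e n) = 0) (hdiag : ∀ n, f n (e n) = 1) (k n : ℕ) :
    f k (biorthogonalize e f n) = if k = n then 1 else 0 := by
  induction n using Nat.strong_induction_on generalizing k with
  | _ n ih =>
    have hsum : ∑ m ∈ Finset.range n, f m (e n) * f k (biorthogonalize e f m)
        = if k < n then f k (e n) else 0 := by
      rw [Finset.sum_congr rfl fun m hm => by rw [ih m (Finset.mem_range.1 hm)]]
      simp
    rw [biorthogonalize_eq, map_sub, map_sum]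
    simp only [map_smul, smul_eq_mul]
    rw [hsum]
    rcases lt_trichotomy k n with hkn | rfl | hnk
    · simp [hkn, hkn.ne]
    · simp [hdiag]
    · simp [hlower k n hnk, hnk.ne', hnk.not_gt]

end Biorthogonal

lemma linearIndependent_fun_pow (K : Type*) [CommRing K] [IsDomain K] :
    LinearIndependent K (fun (t : K) (n : ℕ) => t ^ n) :=
  ((linearIndependent_monoidHom (Multiplicative ℕ) K).comp (powersHom K)
    (powersHom K).injective).map' (LinearMap.funLeft K K Multiplicative.ofAdd)
    (LinearMap.ker_eq_bot.2 <|
      LinearMap.funLeft_injective_of_surjective K K _ Multiplicative.ofAdd.surjective)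

section Normed

variable {𝕜 E : Type*} [RCLike 𝕜] [NormedAddCommGroup E] [NormedSpace 𝕜 E]

lemma exists_dual_eq_one_of_notMem (S : Submodule 𝕜 E) [FiniteDimensional 𝕜 S] {x : E}
    (hx : x ∉ S) : ∃ f : StrongDual 𝕜 E, (∀ s ∈ S, f s = 0) ∧ f x = 1 := by
  obtain ⟨P, hP⟩ := Submodule.ClosedComplemented.of_finiteDimensional S
  let Q : E →L[𝕜] E := ContinuousLinearMap.id 𝕜 E - S.subtypeL.comp P
  have hQ : ∀ s ∈ S, Q s = 0 := fun s hs => by simp [Q, hP ⟨s, hs⟩]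
  have hQx : Q x ≠ 0 := fun h => hx <| by
    rw [sub_eq_zero.1 (by simpa [Q] using h : x - P x = 0)]
    exact (P x).2
  obtain ⟨g, hg⟩ := SeparatingDual.exists_eq_one (R := 𝕜) hQx
  exact ⟨g.comp Q, fun s hs => by simp [hQ s hs], hg⟩

lemma exists_dual_lowerTriangular {e : ℕ → E} (he : LinearIndependent 𝕜 e) :
    ∃ f : ℕ → StrongDual 𝕜 E, (∀ k n, n < k → f k (e n) = 0) ∧ ∀ n, f n (e n) = 1 := by
  have key n :=
    have := FiniteDimensional.span_of_finite 𝕜 ((finite_Iio n).image e)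
    exists_dual_eq_one_of_notMem _ (he.notMem_span_image (s := Iio n) (lt_irrefl n))
  choose f hfS hfe using key
  exact ⟨f, fun k n hnk => hfS k _ (Submodule.subset_span ⟨n, hnk, rfl⟩), hfe⟩

lemma exists_biorthogonal_of_linearIndependent {e : ℕ → E} (he : LinearIndependent 𝕜 e) :
    ∃ (y : ℕ → E) (f : ℕ → StrongDual 𝕜 E),
      (∀ n, ‖y n‖ ≤ 1) ∧ ∀ k n, f k (y n) = if k = n then 1 else 0 := by
  obtain ⟨f, hlower, hdiag⟩ := exists_dual_lowerTriangular he
  set y := biorthogonalize e (fun n => (f n : Module.Dual 𝕜 E))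
  have hfy : ∀ k n, f k (y n) = if k = n then 1 else 0 :=
    apply_biorthogonalize (f := fun n => (f n : Module.Dual 𝕜 E)) hlower hdiag
  set c : ℕ → ℝ := fun n => 1 + ‖y n‖
  have hc n : 0 < c n := by positivity
  refine ⟨fun n => ((c n)⁻¹ : 𝕜) • y n, fun n => (c n : 𝕜) • f n, fun n => ?_,
    fun k n => ?_⟩
  · rw [norm_smul, norm_inv, RCLike.norm_ofReal, abs_of_pos (hc n), inv_mul_le_iff₀ (hc n)]
    simp [c]
  · by_cases hkn : k = n
    · subst hkn
      simp [hfy, (hc k).ne']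
    · simp [hfy, hkn]

lemma continuum_le_rank_of_biorthogonal [CompleteSpace E] (y : ℕ → E)
    (f : ℕ → StrongDual 𝕜 E) (hy : ∀ n, ‖y n‖ ≤ 1)
    (hfy : ∀ k n, f k (y n) = if k = n then 1 else 0) :
    𝔠 ≤ Module.rank 𝕜 E := by
  have hsum (t : Ioo (0 : ℝ) 1) : Summable fun n => ((t : ℝ) : 𝕜) ^ n • y n := by
    refine .of_norm_bounded (summable_geometric_of_lt_one t.2.1.le t.2.2) fun n => ?_
    rw [norm_smul, norm_pow, RCLike.norm_ofReal, abs_of_pos t.2.1]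
    exact mul_le_of_le_one_right (pow_nonneg t.2.1.le n) (hy n)
  set g : Ioo (0 : ℝ) 1 → E := fun t => ∑' n, ((t : ℝ) : 𝕜) ^ n • y n
  have hfg (t : Ioo (0 : ℝ) 1) (k : ℕ) : f k (g t) = ((t : ℝ) : 𝕜) ^ k := by
    rw [(f k).map_tsum (hsum t), tsum_eq_single k fun n hn => by simp [hfy, Ne.symm hn]]
    simp [hfy]
  have hg : LinearIndependent 𝕜 g := by
    refine LinearIndependent.of_comp (LinearMap.pi fun k => (f k : E →ₗ[𝕜] 𝕜)) ?_
    have hcoord : (LinearMap.pi fun k => (f k : E →ₗ[𝕜] 𝕜)) ∘ g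
        = (fun (s : 𝕜) (n : ℕ) => s ^ n) ∘ fun t : Ioo (0 : ℝ) 1 => ((t : ℝ) : 𝕜) := by
      ext t k
      simp [hfg]
    rw [hcoord]
    exact (linearIndependent_fun_pow 𝕜).comp _
      ((RCLike.ofReal_injective (K := 𝕜)).comp Subtype.val_injective)
  simpa [mk_Ioo_real zero_lt_one] using hg.cardinal_lift_le_rank

lemma continuum_le_rank_of_aleph0_le [CompleteSpace E] (h : ℵ₀ ≤ Module.rank 𝕜 E) :
    𝔠 ≤ Module.rank 𝕜 E := by
  let b := Module.Free.chooseBasis 𝕜 E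
  have : Infinite (Module.Free.ChooseBasisIndex 𝕜 E) :=
    Cardinal.infinite_iff.2 (Module.Free.rank_eq_card_chooseBasisIndex 𝕜 E ▸ h)
  obtain ⟨y, f, hy, hfy⟩ := exists_biorthogonal_of_linearIndependent
    (b.linearIndependent.comp _ (Infinite.natEmbedding _).injective)
  exact continuum_le_rank_of_biorthogonal y f hy hfy

end Normed

lemma lift_rank_finsupp_le_of_injective {R : Type*} {ι : Type v} {M : Type w} {E : Type u}
    [Ring R] [AddCommGroup M] [Module R M] [AddCommGroup E] [Module R E]
    (coord : E →ₗ[R] (ι → M)) (hinj : Function.Injective coord)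
    (hc00 : ∀ f : ι → M, (Function.support f).Finite → f ∈ Set.range coord) :
    lift.{u} (Module.rank R (ι →₀ M)) ≤ lift.{max v w} (Module.rank R E) := by
  have hrange (f : ι →₀ M) : Finsupp.lcoeFun (R := R) f ∈ LinearMap.range coord :=
    hc00 _ f.hasFiniteSupport
  refine LinearMap.lift_rank_le_of_injective
    ((LinearEquiv.ofInjective coord hinj).symm.toLinearMap ∘ₗ
      (Finsupp.lcoeFun : (ι →₀ M) →ₗ[R] ι → M).codRestrict _ hrange) ?_
  rw [LinearMap.coe_comp]
  refine (LinearEquiv.injective _).comp fun f g h => DFunLike.coe_injective ?_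
  simpa using congrArg Subtype.val h

lemma rank_le_rank_ker_apply {𝕜 : Type*} {V E : Type u} [RCLike 𝕜] [NormedAddCommGroup V]
    [NormedSpace 𝕜 V] [NormedAddCommGroup E] [NormedSpace 𝕜 E] {v : V →L[𝕜] E} (hv : v ≠ 0)
    {x : V} (hx : v x = 0) :
    Module.rank 𝕜 E ≤ Module.rank 𝕜 ((ContinuousLinearMap.apply 𝕜 E x).toLinearMap.ker) := by
  obtain ⟨w, hw⟩ := DFunLike.ne_iff.1 hv
  obtain ⟨ψ, hψ⟩ := SeparatingDual.exists_ne_zero (R := 𝕜) hw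
  let φ : StrongDual 𝕜 V := ψ.comp v
  let Φ : E →ₗ[𝕜] (ContinuousLinearMap.apply 𝕜 E x).toLinearMap.ker :=
    LinearMap.codRestrict _ (ContinuousLinearMap.smulRightL 𝕜 V E φ).toLinearMap
      fun z => by simp [φ, hx]
  refine Φ.rank_le_of_injective fun z₁ z₂ h => ?_
  have hw' : φ w • z₁ = φ w • z₂ :=
    congrArg (fun u : (ContinuousLinearMap.apply 𝕜 E x).toLinearMap.ker => (u : V →L[𝕜] E) w) h
  exact smul_right_injective E (show φ w ≠ 0 from hψ) hw'

theorem stmt11_general {V X E : Type u}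
    [NormedAddCommGroup V] [NormedSpace ℝ V]
    [NormedAddCommGroup X] [NormedSpace ℝ X] [Nontrivial X]
    [NormedAddCommGroup E] [NormedSpace ℝ E] [CompleteSpace E]
    (coord : E →ₗ[ℝ] (ℕ → X))
    (hinj : Function.Injective coord)
    (hc00 : ∀ f : ℕ → X, (Function.support f).Finite → f ∈ Set.range coord)
    (v : V →L[ℝ] E) (hv : v ≠ 0) (hninj : ¬ Function.Injective ⇑v) :
    ∃ W : Submodule ℝ (V →L[ℝ] E),
      IsClosed (W : Set (V →L[ℝ] E)) ∧
      max Cardinal.continuum (Module.rank ℝ X) ≤ Module.rank ℝ W ∧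
      v ∈ W ∧ ∀ u ∈ W, u ≠ 0 → ¬ Function.Injective ⇑u := by
  obtain ⟨x, hvx, hx⟩ : ∃ x, v x = 0 ∧ x ≠ 0 := by
    simpa [injective_iff_map_eq_zero] using hninj
  have hE : max ℵ₀ (Module.rank ℝ X) ≤ Module.rank ℝ E := by
    rw [← mul_eq_max_of_aleph0_le_left le_rfl rank_pos.ne']
    simpa [rank_finsupp] using lift_rank_finsupp_le_of_injective coord hinj hc00
  refine ⟨_, (ContinuousLinearMap.apply ℝ E x).isClosed_ker, ?_, hvx,
    fun u hu _ hu_inj => hx (hu_inj (by simpa using hu))⟩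
  calc max 𝔠 (Module.rank ℝ X)
      ≤ Module.rank ℝ E :=
        max_le (continuum_le_rank_of_aleph0_le ((le_max_left _ _).trans hE))
          ((le_max_right _ _).trans hE)
    _ ≤ _ := rank_le_rank_ker_apply hv hvx

/-- For V ≠ {0} normed, X ≠ {0} Banach, E a Banach sequence space with
c₀₀(X) ⊆ E, the set of non-injective continuous linear operators V → E is
(1, β)-spaceable with β = max{𝔠, dim X}. -/
theorem stmt11 {V X E : Type u}
    [NormedAddCommGroup V] [NormedSpace ℝ V] [Nontrivial V]
    [NormedAddCommGroup X] [NormedSpace ℝ X] [CompleteSpace X] [Nontrivial X]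
    [NormedAddCommGroup E] [NormedSpace ℝ E] [CompleteSpace E]
    (coord : E →ₗ[ℝ] (ℕ → X))
    (hinj : Function.Injective coord)
    (hc00 : ∀ f : ℕ → X, (Function.support f).Finite → f ∈ Set.range coord)
    (v : V →L[ℝ] E) (hv : v ≠ 0) (hninj : ¬ Function.Injective ⇑v) :
    ∃ W : Submodule ℝ (V →L[ℝ] E),
      IsClosed (W : Set (V →L[ℝ] E)) ∧
      max Cardinal.continuum (Module.rank ℝ X) ≤ Module.rank ℝ W ∧
      v ∈ W ∧ ∀ u ∈ W, u ≠ 0 → ¬ Function.Injective ⇑u :=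
  stmt11_general coord hinj hc00 v hv hninj
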